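/- For all positive integers q, n, ∏_{k=1}^{∞} (F_{2n(2k+2q-1)} + F_{2n(2q-1)})/(F_{2n(2k+2q-1)} - F_{2n(2q-1)}) = (1/(√5)^{2q-1}) · ∏_{k=1}^{2q-1} L_{2nk}/F_{2nk}. -/

import Mathlib

/-!
For even `b`, Binet's formulas give `F (a + 2b) + F a = F (a + b) L b` and
`F (a + 2b) - F a = L (a + b) F b`. Hence, for `m` even and `g j = F (m (j + 1)) / L (m (j + 1))`,
the `k`-th factor equals `g (k + r) / g k`, and the partial products telescope to
`∏_{j<r} g (K + j) / ∏_{j<r} g j`. Since `F N / L N → 1 / √5`, they converge to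
`(1 / √5) ^ r / ∏_{j<r} g j`; as every factor is at least `1`, the product also converges
unconditionally, which is what `tprod` requires.
-/

def lucas : ℕ → ℕ
  | 0 => 2
  | 1 => 1
  | n + 2 => lucas n + lucas (n + 1)

open Real goldenRatio Filter Finset Topology

theorem coe_lucas_eq : ∀ m : ℕ, (lucas m : ℝ) = φ ^ m + ψ ^ m
  | 0 => by norm_num [lucas]
  | 1 => by norm_num [lucas, goldenRatio, goldenConj]
  | m + 2 => by
    rw [lucas, Nat.cast_add, coe_lucas_eq m, coe_lucas_eq (m + 1)]
    linear_combination φ ^ m * goldenRatio_sq + ψ ^ m * goldenConj_sq -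
      (φ ^ m + ψ ^ m) / 2 * Real.sq_sqrt (by norm_num : (0 : ℝ) ≤ 5)

theorem lucas_pos : ∀ m : ℕ, 0 < lucas m
  | 0 => by simp [lucas]
  | 1 => by simp [lucas]
  | m + 2 => by rw [lucas]; exact Nat.add_pos_left (lucas_pos m) _

theorem goldenRatio_pow_mul_goldenConj_pow_of_even {b : ℕ} (hb : Even b) : φ ^ b * ψ ^ b = 1 := by
  rw [← mul_pow, goldenRatio_mul_goldenConj, hb.neg_one_pow]

theorem fib_add_two_mul_add_fib {b : ℕ} (a : ℕ) (hb : Even b) :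
    (Nat.fib (a + 2 * b) : ℝ) + Nat.fib a = Nat.fib (a + b) * lucas b := by
  rw [Real.coe_fib_eq, Real.coe_fib_eq, Real.coe_fib_eq, coe_lucas_eq]
  field_simp
  linear_combination (ψ ^ a - φ ^ a) * goldenRatio_pow_mul_goldenConj_pow_of_even hb

theorem fib_add_two_mul_sub_fib {b : ℕ} (a : ℕ) (hb : Even b) :
    (Nat.fib (a + 2 * b) : ℝ) - Nat.fib a = lucas (a + b) * Nat.fib b := by
  rw [Real.coe_fib_eq, Real.coe_fib_eq, Real.coe_fib_eq, coe_lucas_eq]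
  field_simp
  linear_combination (φ ^ a - ψ ^ a) * goldenRatio_pow_mul_goldenConj_pow_of_even hb

theorem tendsto_fib_div_lucas :
    Tendsto (fun N ↦ (Nat.fib N : ℝ) / lucas N) atTop (𝓝 (1 / √5)) := by
  have hratio : |ψ / φ| < 1 := by
    rw [abs_div, abs_of_neg goldenConj_neg, abs_of_pos goldenRatio_pos, div_lt_one goldenRatio_pos]
    linarith [neg_one_lt_goldenConj, one_lt_goldenRatio]
  have hpow := tendsto_pow_atTop_nhds_zero_of_abs_lt_one hratio
  have hlim : Tendsto (fun N ↦ (1 - (ψ / φ) ^ N) / (√5 * (1 + (ψ / φ) ^ N))) atTop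
      (𝓝 ((1 - 0) / (√5 * (1 + 0)))) :=
    (tendsto_const_nhds.sub hpow).div (tendsto_const_nhds.mul (tendsto_const_nhds.add hpow))
      (by positivity)
  rw [sub_zero, add_zero, mul_one] at hlim
  refine hlim.congr fun N ↦ ?_
  have hφ : φ ^ N ≠ 0 := (pow_pos goldenRatio_pos N).ne'
  have hL : φ ^ N + ψ ^ N ≠ 0 := by rw [← coe_lucas_eq]; exact_mod_cast (lucas_pos N).ne'
  rw [Real.coe_fib_eq, coe_lucas_eq, div_pow, one_add_div hφ, one_sub_div hφ]
  field_simp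

theorem Finset.prod_range_div_shift {G : Type*} [Field G] {g : ℕ → G}
    (hg : ∀ j, g j ≠ 0) (r K : ℕ) :
    ∏ k ∈ range K, g (k + r) / g k = (∏ j ∈ range r, g (K + j)) / ∏ j ∈ range r, g j := by
  have hsplit := prod_range_add g K r
  rw [add_comm, prod_range_add] at hsplit
  rw [prod_div_distrib, div_eq_div_iff (prod_ne_zero_iff.2 fun k _ ↦ hg k)
    (prod_ne_zero_iff.2 fun j _ ↦ hg j)]
  simp_rw [add_comm _ r]
  linear_combination hsplit

theorem Real.hasProd_of_one_le_of_tendsto_prod_range {f : ℕ → ℝ} {L : ℝ} (hf : ∀ k, 1 ≤ f k)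
    (h : Tendsto (fun K ↦ ∏ k ∈ range K, f k) atTop (𝓝 L)) : HasProd f L := by
  have hL : 0 < L := zero_lt_one.trans_le <| ge_of_tendsto' h fun K ↦ one_le_prod fun k _ ↦ hf k
  have hpos : ∀ k, 0 < f k := fun k ↦ zero_lt_one.trans_le (hf k)
  rw [← exp_log hL]
  refine hasProd_of_hasSum_log hpos
    ((hasSum_iff_tendsto_nat_of_nonneg (fun k ↦ log_nonneg (hf k)) _).2 ?_)
  simp_rw [← log_prod fun k _ ↦ (hpos k).ne']
  exact ((continuousAt_log hL.ne').tendsto).comp h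

theorem tprod_fib_add_fib_div_fib_sub_fib {m : ℕ} (hm : 0 < m) (hme : Even m) (r : ℕ) :
    ∏' k : ℕ,
        ((Nat.fib (m * (2 * (k + 1) + r)) : ℝ) + Nat.fib (m * r)) /
          ((Nat.fib (m * (2 * (k + 1) + r)) : ℝ) - Nat.fib (m * r)) =
      (1 / √5) ^ r * ∏ k ∈ Icc 1 r, (lucas (m * k) : ℝ) / Nat.fib (m * k) := by
  set g : ℕ → ℝ := fun j ↦ Nat.fib (m * (j + 1)) / lucas (m * (j + 1)) with hg
  have hfib (j : ℕ) : (0 : ℝ) < Nat.fib (m * (j + 1)) := by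
    exact_mod_cast Nat.fib_pos.2 (Nat.mul_pos hm j.succ_pos)
  have hlucas (j : ℕ) : (0 : ℝ) < lucas j := by exact_mod_cast lucas_pos j
  have hsplit (k : ℕ) : m * (2 * (k + 1) + r) = m * r + 2 * (m * (k + 1)) := by ring
  have hsum (k : ℕ) : m * (k + r + 1) = m * r + m * (k + 1) := by ring
  have hnum (k : ℕ) := fib_add_two_mul_add_fib (m * r) (hme.mul_right (k + 1))
  have hden (k : ℕ) := fib_add_two_mul_sub_fib (m * r) (hme.mul_right (k + 1))
  have hfactor (k : ℕ) : ((Nat.fib (m * (2 * (k + 1) + r)) : ℝ) + Nat.fib (m * r)) /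
      ((Nat.fib (m * (2 * (k + 1) + r)) : ℝ) - Nat.fib (m * r)) = g (k + r) / g k := by
    have := hfib k
    rw [hsplit, hnum, hden, ← hsum, hg]
    field_simp
  have hone (k : ℕ) : 1 ≤ g (k + r) / g k := by
    rw [← hfactor, one_le_div (by rw [hsplit, hden]; exact mul_pos (hlucas _) (hfib k))]
    linarith [(Nat.fib (m * r)).cast_nonneg (α := ℝ)]
  have hlim : Tendsto g atTop (𝓝 (1 / √5)) :=
    tendsto_fib_div_lucas.comp ((tendsto_add_atTop_nat 1).const_mul_atTop' hm)
  have hpartial : Tendsto (fun K ↦ ∏ k ∈ range K, g (k + r) / g k) atTop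
      (𝓝 ((1 / √5) ^ r / ∏ j ∈ range r, g j)) := by
    simp_rw [prod_range_div_shift (g := g) fun j ↦ (div_pos (hfib j) (hlucas _)).ne']
    refine Tendsto.div_const ?_ _
    simpa using tendsto_finsetProd (range r) fun j _ ↦ hlim.comp (tendsto_add_atTop_nat j)
  simp_rw [hfactor]
  rw [(Real.hasProd_of_one_le_of_tendsto_prod_range hone hpartial).tprod_eq, div_eq_mul_inv,
    ← prod_inv_distrib, range_eq_Ico, ← Ico_add_one_right_eq_Icc, ← prod_Ico_add' _ 0 r 1]
  simp_rw [hg, inv_div]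

theorem stmt_13 (q n : ℕ) (hq : 0 < q) (hn : 0 < n) :
    ∏' k : ℕ,
        ((Nat.fib (2 * n * (2 * (k + 1) + 2 * q - 1)) : ℝ) + (Nat.fib (2 * n * (2 * q - 1)) : ℝ)) /
          ((Nat.fib (2 * n * (2 * (k + 1) + 2 * q - 1)) : ℝ) - (Nat.fib (2 * n * (2 * q - 1)) : ℝ)) =
      (1 / Real.sqrt 5 ^ (2 * q - 1)) *
        ∏ k ∈ Finset.Icc 1 (2 * q - 1),
          (lucas (2 * n * k) : ℝ) / (Nat.fib (2 * n * k) : ℝ) := by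
  have hindex (k : ℕ) : 2 * (k + 1) + 2 * q - 1 = 2 * (k + 1) + (2 * q - 1) := by omega
  simp_rw [hindex, ← one_div_pow]
  exact tprod_fib_add_fib_div_fib_sub_fib (by omega) (even_two_mul n) (2 * q - 1)
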